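/- For every real number σ > 0, ∫_{-∞}^{-1} e^p/p dp - ∫₀^{-1} (e^p - 1)/p dp = γ, where γ is the Euler–Mascheroni constant. -/

import Mathlib

/-!
After the substitution `p = -t` the left-hand side is `∫₀¹ (1 - e⁻ᵗ)/t dt - ∫₁^∞ e⁻ᵗ/t dt`.
Integrating both pieces by parts against `log t` (the boundary terms vanish since `log 1 = 0`)
turns it into `-∫₀^∞ log t e⁻ᵗ dt`, which is `-Γ'(1) = γ` by differentiating Euler's integral.
-/

open MeasureTheory Real Set Filter Topology

lemma integral_log_mul_exp_neg_Ioi :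
    ∫ t in Ioi (0 : ℝ), log t * exp (-t) = -eulerMascheroniConstant := by
  have hderiv := Complex.hasDerivAt_GammaIntegral (s := 1) (by norm_num)
  have hcast : ∫ t : ℝ in Ioi 0, (t : ℂ) ^ ((1 : ℂ) - 1) * (log t * exp (-t))
      = ((∫ t in Ioi (0 : ℝ), log t * exp (-t) : ℝ) : ℂ) := by
    rw [← integral_complex_ofReal]
    refine setIntegral_congr_fun measurableSet_Ioi fun t _ ↦ ?_
    simp
  have hGamma : Complex.Gamma =ᶠ[𝓝 1] Complex.GammaIntegral := by
    filter_upwards [Complex.continuous_re.isOpen_preimage _ isOpen_Ioi |>.mem_nhds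
      (by norm_num : (1 : ℂ) ∈ Complex.re ⁻¹' Ioi 0)] with z hz
    exact Complex.Gamma_eq_integral hz
  rw [hcast] at hderiv
  exact_mod_cast (hderiv.congr_of_eventuallyEq hGamma).unique Complex.hasDerivAt_Gamma_one

-- The integral is `-γ ≠ 0`, so it cannot be the junk value of a non-integrable function.
lemma integrableOn_log_mul_exp_neg_Ioi :
    IntegrableOn (fun t : ℝ ↦ log t * exp (-t)) (Ioi 0) :=
  .of_integral_ne_zero <| by
    rw [integral_log_mul_exp_neg_Ioi, neg_ne_zero]
    linarith [one_half_lt_eulerMascheroniConstant]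

lemma one_sub_exp_neg_nonneg {t : ℝ} (ht : 0 ≤ t) : 0 ≤ 1 - exp (-t) := by
  linarith [exp_le_one_iff.mpr (neg_nonpos.mpr ht)]

lemma one_sub_exp_neg_le_self (t : ℝ) : 1 - exp (-t) ≤ t := by
  linarith [one_sub_le_exp_neg t]

lemma integrableOn_exp_neg_div_Ioi_one :
    IntegrableOn (fun t : ℝ ↦ exp (-t) / t) (Ioi 1) := by
  refine (exp_neg_integrableOn_Ioi 1 one_pos).mono' ?_ ?_
  · exact (ContinuousOn.div (by fun_prop) continuousOn_id
      fun t ht ↦ (one_pos.trans ht).ne').aestronglyMeasurable measurableSet_Ioi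
  · filter_upwards [ae_restrict_mem measurableSet_Ioi] with t (ht : 1 < t)
    rw [norm_div, norm_of_nonneg (exp_pos _).le, norm_of_nonneg (by linarith), neg_one_mul]
    exact div_le_self (exp_pos _).le ht.le

lemma integrableOn_one_sub_exp_neg_div_Ioc :
    IntegrableOn (fun t : ℝ ↦ (1 - exp (-t)) / t) (Ioc 0 1) := by
  refine Measure.integrableOn_of_bounded (M := 1) measure_Ioc_lt_top.ne
    (by fun_prop : Measurable fun t : ℝ ↦ (1 - exp (-t)) / t).aestronglyMeasurable ?_
  filter_upwards [ae_restrict_mem measurableSet_Ioc] with t ht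
  rw [norm_of_nonneg (div_nonneg (one_sub_exp_neg_nonneg ht.1.le) ht.1.le), div_le_one ht.1]
  exact one_sub_exp_neg_le_self t

lemma integral_exp_neg_div_Ioi_one :
    ∫ t in Ioi (1 : ℝ), exp (-t) / t = ∫ t in Ioi (1 : ℝ), log t * exp (-t) := by
  have hlog : IntegrableOn (fun t : ℝ ↦ log t * exp (-t)) (Ioi 1) :=
    integrableOn_log_mul_exp_neg_Ioi.mono_set (Ioi_subset_Ioi zero_le_one)
  have hderiv : ∀ x ∈ Ici (1 : ℝ), HasDerivAt (fun t ↦ log t * exp (-t))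
      (exp (-x) / x - log x * exp (-x)) x := fun x hx ↦
    ((hasDerivAt_log (one_pos.trans_le hx).ne').mul (hasDerivAt_neg x).exp).congr_deriv (by ring)
  have hlim : Tendsto (fun t : ℝ ↦ log t * exp (-t)) atTop (𝓝 0) := by
    refine squeeze_zero' ?_ ?_ (by simpa using tendsto_pow_mul_exp_neg_atTop_nhds_zero 1)
    · filter_upwards [eventually_ge_atTop 1] with t ht
      exact mul_nonneg (log_nonneg ht) (exp_pos _).le
    · filter_upwards [eventually_ge_atTop 1] with t ht
      simpa using mul_le_mul_of_nonneg_right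
        ((log_le_sub_one_of_pos (by linarith)).trans (sub_le_self _ zero_le_one)) (exp_pos (-t)).le
  have h := integral_Ioi_of_hasDerivAt_of_tendsto' hderiv
    (integrableOn_exp_neg_div_Ioi_one.sub hlog) hlim
  rw [integral_sub integrableOn_exp_neg_div_Ioi_one hlog] at h
  simpa [sub_eq_zero] using h

lemma integral_one_sub_exp_neg_div_Ioc :
    ∫ t in Ioc (0 : ℝ) 1, (1 - exp (-t)) / t = -∫ t in Ioc (0 : ℝ) 1, log t * exp (-t) := by
  have hlog : IntegrableOn (fun t : ℝ ↦ log t * exp (-t)) (Ioc 0 1) :=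
    integrableOn_log_mul_exp_neg_Ioi.mono_set Ioc_subset_Ioi_self
  have hderiv : ∀ x ∈ Ioo (0 : ℝ) 1, HasDerivAt (fun t ↦ log t * (1 - exp (-t)))
      ((1 - exp (-x)) / x + log x * exp (-x)) x := fun x hx ↦
    ((hasDerivAt_log hx.1.ne').mul ((hasDerivAt_neg x).exp.const_sub 1)).congr_deriv (by ring)
  have hint : IntervalIntegrable (fun t ↦ (1 - exp (-t)) / t + log t * exp (-t)) volume 0 1 :=
    (intervalIntegrable_iff_integrableOn_Ioc_of_le zero_le_one).mpr
      (integrableOn_one_sub_exp_neg_div_Ioc.add hlog)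
  have hzero : Tendsto (fun t : ℝ ↦ log t * (1 - exp (-t))) (𝓝[>] 0) (𝓝 0) := by
    have hb := tendsto_log_mul_rpow_nhdsGT_zero one_pos
    simp only [rpow_one] at hb
    refine squeeze_zero_norm' ?_ (by simpa using hb.norm)
    filter_upwards [self_mem_nhdsWithin] with t (ht : 0 < t)
    rw [norm_mul, norm_of_nonneg (one_sub_exp_neg_nonneg ht.le), Real.norm_eq_abs, abs_of_pos ht]
    gcongr
    exact one_sub_exp_neg_le_self t
  have hone : Tendsto (fun t : ℝ ↦ log t * (1 - exp (-t))) (𝓝[<] 1) (𝓝 0) := by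
    have hcont : ContinuousAt (fun t : ℝ ↦ log t * (1 - exp (-t))) 1 :=
      (continuousAt_log one_ne_zero).mul (by fun_prop)
    simpa using hcont.tendsto.mono_left nhdsWithin_le_nhds
  have h := intervalIntegral.integral_eq_sub_of_hasDerivAt_of_tendsto zero_lt_one hderiv hint
    hzero hone
  rw [intervalIntegral.integral_of_le zero_le_one,
    integral_add integrableOn_one_sub_exp_neg_div_Ioc hlog] at h
  linarith

theorem stmt_2_general :
    (∫ p in Set.Iic (-1 : ℝ), Real.exp p / p) - ∫ p in (0:ℝ)..(-1), (Real.exp p - 1) / p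
      = Real.eulerMascheroniConstant := by
  have hnear : IntegrableOn (fun t : ℝ ↦ log t * exp (-t)) (Ioc 0 1) :=
    integrableOn_log_mul_exp_neg_Ioi.mono_set Ioc_subset_Ioi_self
  have hfar : IntegrableOn (fun t : ℝ ↦ log t * exp (-t)) (Ioi 1) :=
    integrableOn_log_mul_exp_neg_Ioi.mono_set (Ioi_subset_Ioi zero_le_one)
  have hsplit := integral_log_mul_exp_neg_Ioi
  rw [← Ioc_union_Ioi_eq_Ioi zero_le_one,
    setIntegral_union (Ioc_disjoint_Ioi le_rfl) measurableSet_Ioi hnear hfar] at hsplit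
  have hfirst : ∫ p in Iic (-1 : ℝ), exp p / p = -∫ t in Ioi (1 : ℝ), exp (-t) / t := by
    rw [← integral_comp_neg_Ioi, ← integral_neg]
    simp only [div_neg]
  have hsecond : ∫ p in (0 : ℝ)..(-1), (exp p - 1) / p
      = -∫ t in Ioc (0 : ℝ) 1, (1 - exp (-t)) / t := by
    rw [← neg_zero, ← intervalIntegral.integral_comp_neg, intervalIntegral.integral_symm,
      intervalIntegral.integral_of_le zero_le_one]
    simp only [neg_zero, div_neg, ← neg_div, neg_sub]
  rw [hfirst, hsecond, integral_exp_neg_div_Ioi_one, integral_one_sub_exp_neg_div_Ioc]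
  linarith

theorem stmt_2 (σ : ℝ) (hσ : 0 < σ) :
    (∫ p in Set.Iic (-1 : ℝ), Real.exp p / p) - ∫ p in (0:ℝ)..(-1), (Real.exp p - 1) / p
      = Real.eulerMascheroniConstant :=
  stmt_2_general
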